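/- Let A : ℝ⁴ → ℝ⁴ be smooth with F_{μν} := ∂_μ A_ν − ∂_ν A_μ, let g : ℝ⁴ → Matrix 4 4 ℝ be smooth with symmetric invertible values of negative determinant, and for a C^∞ diffeomorphism η : ℝ⁴ → ℝ⁴ define the parametrized electromagnetic Lagrangian L̃[A, η](x) := −¼ Σ ((η*g)(x)⁻¹)^{μα} ((η*g)(x)⁻¹)^{νβ} F_{αβ}(x) F_{μν}(x) √(−det (η*g)(x)), where (η*g)(x) := Dη(x)ᵀ g(η(x)) Dη(x). Let σ : ℝ⁴ → ℝ⁴ be a C^∞ diffeomorphism with det Dσ > 0 everywhere, and define A'_μ(σ(x)) := Σ_α A_α(x) (Dσ(x)⁻¹)^α{}_μ. Then for every x ∈ ℝ⁴: L̃[A', η ∘ σ⁻¹](σ(x)) · det Dσ(x) = L̃[A, η](x). -/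

import Mathlib

open Matrix BigOperators

/-- Norm on matrices (sup norm coming from the Pi structure); used to do calculus
on matrix-valued variables. -/
noncomputable instance matrixNormedAddCommGroup {α β : Type*} [Fintype α] [Fintype β] :
    NormedAddCommGroup (Matrix α β ℝ) :=
  inferInstanceAs (NormedAddCommGroup (α → β → ℝ))

noncomputable instance matrixNormedSpace {α β : Type*} [Fintype α] [Fintype β] :
    NormedSpace ℝ (Matrix α β ℝ) :=
  inferInstanceAs (NormedSpace ℝ (α → β → ℝ))

/-- Partial derivative `∂_μ f (x)` of a scalar function on `ℝ^N`. -/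
noncomputable def pd {N : ℕ} (f : (Fin N → ℝ) → ℝ) (μ : Fin N) (x : Fin N → ℝ) : ℝ :=
  fderiv ℝ f x (Pi.single μ 1)

/-- Jacobian matrix `(Df(x))^a{}_μ = ∂_μ f^a (x)` of a map `ℝ^N → ℝ^M`. -/
noncomputable def jac {N M : ℕ} (f : (Fin N → ℝ) → (Fin M → ℝ)) (x : Fin N → ℝ) :
    Matrix (Fin M) (Fin N) ℝ :=
  Matrix.of fun a μ => fderiv ℝ f x (Pi.single μ 1) a

/-- The field strength `F_{μν} = ∂_μ A_ν − ∂_ν A_μ` of a potential `A`. -/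
noncomputable def Fstr (A : (Fin 4 → ℝ) → (Fin 4 → ℝ)) (μ ν : Fin 4) (x : Fin 4 → ℝ) : ℝ :=
  pd (fun x' => A x' ν) μ x - pd (fun x' => A x' μ) ν x

/-- The electromagnetic Lagrangian density
`L[A, G] = −¼ G^{μα} G^{νβ} F_{αβ} F_{μν} √(−det G)`. -/
noncomputable def emLag (A : (Fin 4 → ℝ) → (Fin 4 → ℝ))
    (G : (Fin 4 → ℝ) → Matrix (Fin 4) (Fin 4) ℝ) (x : Fin 4 → ℝ) : ℝ :=
  -(1/4) * (∑ μ, ∑ ν, ∑ α, ∑ β,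
      (G x)⁻¹ μ α * (G x)⁻¹ ν β * Fstr A α β x * Fstr A μ ν x) *
    Real.sqrt (-(G x).det)

/-! ### Auxiliary lemmas -/

lemma fderiv_apply_pd {n : ℕ} (f : (Fin n → ℝ) → ℝ) (x v : Fin n → ℝ) :
    fderiv ℝ f x v = ∑ i, v i * pd f i x := by
  have hv : v = ∑ i, v i • (Pi.single i 1 : Fin n → ℝ) := by
    funext j; simp [Finset.sum_apply, Pi.single_apply]
  conv_lhs => rw [hv]
  rw [map_sum]; simp [pd]

lemma fderiv_apply_jac {n m : ℕ} (f : (Fin n → ℝ) → (Fin m → ℝ)) (x v : Fin n → ℝ) (a : Fin m) :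
    fderiv ℝ f x v a = ∑ i, jac f x a i * v i := by
  have hv : v = ∑ i, v i • (Pi.single i 1 : Fin n → ℝ) := by
    funext j; simp [Finset.sum_apply, Pi.single_apply]
  conv_lhs => rw [hv]
  rw [map_sum]
  simp [jac, Finset.sum_apply, mul_comm]

lemma jac_comp {n m p : ℕ} {f : (Fin m → ℝ) → (Fin p → ℝ)} {g : (Fin n → ℝ) → (Fin m → ℝ)}
    (hf : Differentiable ℝ f) (hg : Differentiable ℝ g) (x : Fin n → ℝ) :
    jac (f ∘ g) x = jac f (g x) * jac g x := by
  ext a μ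
  have h : fderiv ℝ (f ∘ g) x = (fderiv ℝ f (g x)).comp (fderiv ℝ g x) :=
    fderiv_comp x (hf (g x)) (hg x)
  simp only [jac, Matrix.of_apply, Matrix.mul_apply, h, ContinuousLinearMap.comp_apply]
  rw [fderiv_apply_jac]
  rfl

lemma jac_id {n : ℕ} (x : Fin n → ℝ) : jac (fun y : Fin n → ℝ => y) x = 1 := by
  ext a μ
  simp [jac, fderiv_id', Matrix.one_apply, Pi.single_apply]

lemma pd_mul {n : ℕ} {f h : (Fin n → ℝ) → ℝ} {x : Fin n → ℝ}
    (hf : DifferentiableAt ℝ f x) (hh : DifferentiableAt ℝ h x) (μ : Fin n) :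
    pd (fun y => f y * h y) μ x = pd f μ x * h x + f x * pd h μ x := by
  simp [pd, fderiv_fun_mul hf hh]; ring

lemma pd_sum {n : ℕ} {ι : Type*} (s : Finset ι) {f : ι → (Fin n → ℝ) → ℝ} {x : Fin n → ℝ}
    (hf : ∀ i ∈ s, DifferentiableAt ℝ (f i) x) (μ : Fin n) :
    pd (fun y => ∑ i ∈ s, f i y) μ x = ∑ i ∈ s, pd (f i) μ x := by
  simp [pd, fderiv_fun_sum hf]

lemma pd_comp {n m : ℕ} {h : (Fin m → ℝ) → ℝ} {g : (Fin n → ℝ) → (Fin m → ℝ)}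
    {x : Fin n → ℝ} (hh : DifferentiableAt ℝ h (g x)) (hg : DifferentiableAt ℝ g x) (μ : Fin n) :
    pd (fun y => h (g y)) μ x = ∑ β, pd h β (g x) * jac g x β μ := by
  have hcomp : fderiv ℝ (h ∘ g) x = (fderiv ℝ h (g x)).comp (fderiv ℝ g x) :=
    fderiv_comp x hh hg
  show fderiv ℝ (h ∘ g) x (Pi.single μ 1) = _
  rw [hcomp, ContinuousLinearMap.comp_apply, fderiv_apply_pd]
  refine Finset.sum_congr rfl fun β _ => ?_
  rw [mul_comm]; rfl

lemma contDiff_comp_proj {n m : ℕ} {f : (Fin n → ℝ) → (Fin m → ℝ)}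
    (hf : ContDiff ℝ (⊤ : ℕ∞) f) (a : Fin m) : ContDiff ℝ (⊤ : ℕ∞) (fun x => f x a) :=
  (ContinuousLinearMap.proj (R := ℝ) (φ := fun _ : Fin m => ℝ) a).contDiff.comp hf

lemma jac_entry_eq {n m : ℕ} {f : (Fin n → ℝ) → (Fin m → ℝ)} {x : Fin n → ℝ}
    (hf : DifferentiableAt ℝ f x) (a : Fin m) (μ : Fin n) :
    jac f x a μ = fderiv ℝ (fun y => f y a) x (Pi.single μ 1) := by
  have h1 := fderiv_comp (𝕜 := ℝ)
    (g := ⇑(ContinuousLinearMap.proj (R := ℝ) (φ := fun _ : Fin m => ℝ) a)) (f := f) x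
    (ContinuousLinearMap.proj (R := ℝ) (φ := fun _ : Fin m => ℝ) a).differentiableAt hf
  rw [ContinuousLinearMap.fderiv] at h1
  have h2 : (fun y => f y a)
      = (⇑(ContinuousLinearMap.proj (R := ℝ) (φ := fun _ : Fin m => ℝ) a)) ∘ f := rfl
  rw [h2, h1]; rfl

lemma contDiff_jac_entry {n m : ℕ} {f : (Fin n → ℝ) → (Fin m → ℝ)}
    (hf : ContDiff ℝ (⊤ : ℕ∞) f) (a : Fin m) (μ : Fin n) :
    ContDiff ℝ (⊤ : ℕ∞) (fun x => jac f x a μ) := by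
  have h1 : ContDiff ℝ (⊤ : ℕ∞) (fderiv ℝ f) := hf.fderiv_right (by simp)
  exact ((ContinuousLinearMap.proj (R := ℝ) (φ := fun _ : Fin m => ℝ) a).comp
    (ContinuousLinearMap.apply ℝ (Fin m → ℝ) (Pi.single μ 1))).contDiff.comp h1

/-- Schwarz symmetry of second partial derivatives, for the entries of a Jacobian. -/
lemma pd_jac_symm {n m : ℕ} {f : (Fin n → ℝ) → (Fin m → ℝ)} (hf : ContDiff ℝ (⊤ : ℕ∞) f)
    (x : Fin n → ℝ) (a : Fin m) (μ ν : Fin n) :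
    pd (fun y => jac f y a ν) μ x = pd (fun y => jac f y a μ) ν x := by
  set fa : (Fin n → ℝ) → ℝ := fun y => f y a with hfa
  have hfa' : ContDiff ℝ (⊤ : ℕ∞) fa := contDiff_comp_proj hf a
  have hdiff : Differentiable ℝ f := hf.differentiable (by simp)
  have key : ∀ (ρ τ : Fin n),
      pd (fun y => jac f y a τ) ρ x
        = fderiv ℝ (fderiv ℝ fa) x (Pi.single ρ 1) (Pi.single τ 1) := by
    intro ρ τ
    have heq : (fun y => jac f y a τ) = fun y => (fderiv ℝ fa y) (Pi.single τ 1) := by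
      funext y; exact jac_entry_eq (hdiff y) a τ
    rw [pd, heq]
    have hc : DifferentiableAt ℝ (fderiv ℝ fa) x :=
      ((hfa'.fderiv_right (m := (⊤ : ℕ∞)) (by simp)).differentiable (by simp)) x
    rw [fderiv_clm_apply hc (differentiableAt_const _)]
    simp
  rw [key μ ν, key ν μ]
  exact (hfa'.contDiffAt.isSymmSndFDerivAt (by rw [minSmoothness_of_isRCLikeNormedField]; exact WithTop.coe_le_coe.mpr le_top)) _ _

lemma sum_to_trace (M F : Matrix (Fin 4) (Fin 4) ℝ) :
    ∑ μ, ∑ ν, ∑ α, ∑ β, M μ α * M ν β * F α β * F μ ν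
      = (M * F * Mᵀ * Fᵀ).trace := by
  have h : ∀ μ ν, (M * F * Mᵀ) μ ν = ∑ α, ∑ β, M μ α * M ν β * F α β := by
    intro μ ν
    simp only [Matrix.mul_apply, Matrix.transpose_apply, Finset.sum_mul, Finset.mul_sum]
    rw [Finset.sum_comm]
    refine Finset.sum_congr rfl fun α _ => Finset.sum_congr rfl fun β _ => by ring
  have h2 : (M * F * Mᵀ * Fᵀ).trace = ∑ μ, ∑ ν, (M * F * Mᵀ) μ ν * F μ ν := by
    simp only [Matrix.trace, Matrix.diag_apply, Matrix.mul_apply, Matrix.transpose_apply]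
  rw [h2]
  refine Finset.sum_congr rfl fun μ _ => Finset.sum_congr rfl fun ν _ => ?_
  rw [h, Finset.sum_mul]
  refine Finset.sum_congr rfl fun α _ => ?_
  rw [Finset.sum_mul]

lemma trace_invariant (M F K J : Matrix (Fin 4) (Fin 4) ℝ)
    (hKJ : K * J = 1) :
    ((Kᵀ * M * K)⁻¹ * (Kᵀ * F * K) * ((Kᵀ * M * K)⁻¹)ᵀ * (Kᵀ * F * K)ᵀ).trace
      = (M⁻¹ * F * (M⁻¹)ᵀ * Fᵀ).trace := by
  have hKinv : K⁻¹ = J := Matrix.inv_eq_right_inv hKJ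
  have hG : (Kᵀ * M * K)⁻¹ = J * M⁻¹ * Jᵀ := by
    rw [Matrix.mul_inv_rev, Matrix.mul_inv_rev, hKinv, ← Matrix.transpose_nonsing_inv, hKinv,
      Matrix.mul_assoc]
  have hJK' : Jᵀ * Kᵀ = 1 := by rw [← Matrix.transpose_mul, hKJ, Matrix.transpose_one]
  have e1 : ∀ X : Matrix (Fin 4) (Fin 4) ℝ, Jᵀ * (Kᵀ * X) = X := fun X => by
    rw [← Matrix.mul_assoc, hJK', Matrix.one_mul]
  have e2 : ∀ X : Matrix (Fin 4) (Fin 4) ℝ, K * (J * X) = X := fun X => by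
    rw [← Matrix.mul_assoc, hKJ, Matrix.one_mul]
  rw [hG]
  rw [Matrix.trace_mul_comm]
  simp only [Matrix.transpose_mul, Matrix.transpose_transpose]
  simp only [Matrix.mul_assoc, e1, e2]
  rw [Matrix.trace_mul_comm]
  simp only [Matrix.mul_assoc, e1, e2]
  rw [hJK', Matrix.mul_one, Matrix.trace_mul_comm]
  simp only [Matrix.mul_assoc]

lemma emLag_eq_trace (B : (Fin 4 → ℝ) → (Fin 4 → ℝ))
    (G : (Fin 4 → ℝ) → Matrix (Fin 4) (Fin 4) ℝ) (x : Fin 4 → ℝ) :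
    emLag B G x
      = -(1/4) * ((G x)⁻¹ * (Matrix.of fun a b => Fstr B a b x) * ((G x)⁻¹)ᵀ
          * (Matrix.of fun a b => Fstr B a b x)ᵀ).trace * Real.sqrt (-(G x).det) := by
  rw [emLag]
  have h := sum_to_trace (G x)⁻¹ (Matrix.of fun a b => Fstr B a b x)
  simp only [Matrix.of_apply] at h
  rw [h]


/-- Theorem 1 specialized to electromagnetism: the parametrized
electromagnetic Lagrangian `L̃[A, η](x) := L(j¹A; η*g)(x)` is generally covariant:
`L̃[A', η ∘ σ⁻¹](σ(x)) · det Dσ(x) = L̃[A, η](x)`, where `σ` acts on the potential by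
push-forward and on the covariance field by `η ↦ η ∘ σ⁻¹`. -/
theorem em_parametrized_lagrangian_covariance
    (A : (Fin 4 → ℝ) → (Fin 4 → ℝ)) (hA : ContDiff ℝ (⊤ : ℕ∞) A)
    (g : (Fin 4 → ℝ) → Matrix (Fin 4) (Fin 4) ℝ) (hgsmooth : ContDiff ℝ (⊤ : ℕ∞) g)
    (hgsymm : ∀ u, (g u).IsSymm) (hgdet : ∀ u, (g u).det < 0)
    -- the parametrized electromagnetic Lagrangian, with (η*g)(x) := Dη(x)ᵀ g(η(x)) Dη(x)
    (Ltil : ((Fin 4 → ℝ) → (Fin 4 → ℝ)) → ((Fin 4 → ℝ) → (Fin 4 → ℝ)) →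
      (Fin 4 → ℝ) → ℝ)
    (hLtil : ∀ B η x, Ltil B η x
      = emLag B (fun x' => (jac η x')ᵀ * g (η x') * jac η x') x)
    -- a C^∞ diffeomorphism η of ℝ⁴ (the covariance field)
    (η ηinv : (Fin 4 → ℝ) → (Fin 4 → ℝ))
    (hη : ContDiff ℝ (⊤ : ℕ∞) η) (hηinv : ContDiff ℝ (⊤ : ℕ∞) ηinv)
    (hηl : ∀ x, ηinv (η x) = x) (hηr : ∀ u, η (ηinv u) = u)
    -- a C^∞ diffeomorphism σ of ℝ⁴ with positive Jacobian determinant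
    (σ σinv : (Fin 4 → ℝ) → (Fin 4 → ℝ))
    (hσ : ContDiff ℝ (⊤ : ℕ∞) σ) (hσinv : ContDiff ℝ (⊤ : ℕ∞) σinv)
    (hσl : ∀ x, σinv (σ x) = x) (hσr : ∀ x', σ (σinv x') = x')
    (hσdet : ∀ x, 0 < (jac σ x).det)
    -- the push-forward potential A'
    (A' : (Fin 4 → ℝ) → (Fin 4 → ℝ))
    (hA' : ∀ x μ, A' (σ x) μ = ∑ α, A x α * (jac σ x)⁻¹ α μ) :
    ∀ x, Ltil A' (η ∘ σinv) (σ x) * (jac σ x).det = Ltil A η x := by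
  -- basic differentiability facts
  have hAd : Differentiable ℝ A := hA.differentiable (by simp)
  have hσd : Differentiable ℝ σ := hσ.differentiable (by simp)
  have hσinvd : Differentiable ℝ σinv := hσinv.differentiable (by simp)
  have hηd : Differentiable ℝ η := hη.differentiable (by simp)
  -- Jacobian inverse relations
  have hKJ : ∀ x, jac σinv (σ x) * jac σ x = 1 := by
    intro x
    have h1 : jac (σinv ∘ σ) x = jac σinv (σ x) * jac σ x := jac_comp hσinvd hσd x
    have h2 : σinv ∘ σ = fun y : Fin 4 → ℝ => y := by funext y; exact hσl y
    rw [h2] at h1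
    rw [← h1, jac_id]
  have hJK : ∀ y, jac σ (σinv y) * jac σinv y = 1 := by
    intro y
    have h1 : jac (σ ∘ σinv) y = jac σ (σinv y) * jac σinv y := jac_comp hσd hσinvd y
    have h2 : σ ∘ σinv = fun y : Fin 4 → ℝ => y := by funext y; exact hσr y
    rw [h2] at h1
    rw [← h1, jac_id]
  -- global formula for A'
  have hA'eq : A' = fun y ν => ∑ α, A (σinv y) α * jac σinv y α ν := by
    funext y ν
    have h1 := hA' (σinv y) ν
    rw [hσr y] at h1
    rw [h1]
    refine Finset.sum_congr rfl fun α _ => ?_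
    rw [Matrix.inv_eq_right_inv (hJK y)]
  intro x
  set y := σ x with hy
  set K := jac σinv y with hKdef
  set J := jac σ x with hJdef
  have hσinvy : σinv y = x := hσl x
  -- transformation of the field strength
  have hAcomp : ∀ α : Fin 4, ContDiff ℝ (⊤ : ℕ∞) (fun y' => A (σinv y') α) :=
    fun α => (contDiff_comp_proj hA α).comp hσinv
  have hJent : ∀ (α ν : Fin 4), ContDiff ℝ (⊤ : ℕ∞) (fun y' => jac σinv y' α ν) :=
    fun α ν => contDiff_jac_entry hσinv α ν
  have hterm : ∀ (α ν : Fin 4), DifferentiableAt ℝ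
      (fun y' => A (σinv y') α * jac σinv y' α ν) y :=
    fun α ν => (((hAcomp α).differentiable (by simp)) y).mul
      (((hJent α ν).differentiable (by simp)) y)
  have hpdA : ∀ (α μ : Fin 4), pd (fun y' => A (σinv y') α) μ y
      = ∑ β, pd (fun u => A u α) β x * K β μ := by
    intro α μ
    have h := pd_comp (h := fun u => A u α) (g := σinv)
      ((contDiff_comp_proj hA α).differentiable (by simp) (σinv y)) (hσinvd y) μ
    rw [h, hσinvy]
  have hpdB : ∀ (μ ν : Fin 4), pd (fun y' => A' y' ν) μ y
      = (∑ α, (∑ β, pd (fun u => A u α) β x * K β μ) * K α ν)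
        + ∑ α, A x α * pd (fun y' => jac σinv y' α ν) μ y := by
    intro μ ν
    have h0 : (fun y' => A' y' ν) = fun y' => ∑ α, A (σinv y') α * jac σinv y' α ν := by
      rw [hA'eq]
    rw [h0, pd_sum Finset.univ (fun α _ => hterm α ν) μ]
    rw [← Finset.sum_add_distrib]
    refine Finset.sum_congr rfl fun α _ => ?_
    rw [pd_mul (((hAcomp α).differentiable (by simp)) y) (((hJent α ν).differentiable (by simp)) y) μ]
    rw [hpdA α μ, hσinvy]
  have hF : ∀ (μ ν : Fin 4), Fstr A' μ ν y
      = ∑ a, ∑ b, Fstr A a b x * K a μ * K b ν := by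
    intro μ ν
    rw [Fstr, hpdB μ ν, hpdB ν μ]
    have hcancel : ∀ α : Fin 4, pd (fun y' => jac σinv y' α ν) μ y
        = pd (fun y' => jac σinv y' α μ) ν y := fun α => pd_jac_symm hσinv y α μ ν
    simp only [hcancel]
    rw [add_sub_add_right_eq_sub]
    simp only [Fstr, sub_mul, Finset.sum_sub_distrib, Finset.sum_mul]
    congr 1
    · rw [Finset.sum_comm]
    · refine Finset.sum_congr rfl fun a _ => Finset.sum_congr rfl fun b _ => by ring
  -- matrices
  set 𝔽 : Matrix (Fin 4) (Fin 4) ℝ := Matrix.of fun a b => Fstr A a b x with hFdef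
  have hFmat : (Matrix.of fun a b => Fstr A' a b y) = Kᵀ * 𝔽 * K := by
    ext μ ν
    simp only [Matrix.of_apply, hF μ ν, Matrix.mul_apply, Matrix.transpose_apply, hFdef,
      Finset.sum_mul]
    rw [Finset.sum_comm]
    refine Finset.sum_congr rfl fun a _ => Finset.sum_congr rfl fun b _ => by ring
  -- metric transformation
  set M : Matrix (Fin 4) (Fin 4) ℝ := (jac η x)ᵀ * g (η x) * jac η x with hMdef
  have hGmat : (jac (η ∘ σinv) y)ᵀ * g ((η ∘ σinv) y) * jac (η ∘ σinv) y = Kᵀ * M * K := by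
    have h1 : jac (η ∘ σinv) y = jac η x * K := by
      rw [jac_comp hηd hσinvd y, hσinvy]
    have h2 : (η ∘ σinv) y = η x := by simp [Function.comp, hσinvy]
    rw [h1, h2, Matrix.transpose_mul, hMdef]
    noncomm_ring [Matrix.mul_assoc]
  -- determinants
  have hdetKJ : K.det * J.det = 1 := by
    rw [← Matrix.det_mul, hKJ x, Matrix.det_one]
  have hKpos : 0 < K.det := by
    have hJpos : 0 < J.det := hσdet x
    nlinarith
  have hdetG : (Kᵀ * M * K).det = K.det ^ 2 * M.det := by
    rw [Matrix.det_mul, Matrix.det_mul, Matrix.det_transpose]; ring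
  have hsqrt : Real.sqrt (-(Kᵀ * M * K).det) = K.det * Real.sqrt (-M.det) := by
    rw [hdetG, show -(K.det ^ 2 * M.det) = K.det ^ 2 * (-M.det) by ring,
      Real.sqrt_mul (sq_nonneg _), Real.sqrt_sq hKpos.le]
  -- put everything together
  rw [hLtil A' (η ∘ σinv) y, hLtil A η x]
  rw [emLag_eq_trace, emLag_eq_trace]
  rw [hFmat, hGmat, hsqrt]
  rw [trace_invariant M 𝔽 K J (hKJ x)]
  have : -(1/4) * ((M⁻¹ * 𝔽 * M⁻¹ᵀ * 𝔽ᵀ).trace) * (K.det * Real.sqrt (-M.det)) * J.det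
      = -(1/4) * ((M⁻¹ * 𝔽 * M⁻¹ᵀ * 𝔽ᵀ).trace) * Real.sqrt (-M.det) * (K.det * J.det) := by
    ring
  rw [this, hdetKJ, mul_one]
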